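/- Let X(t) = ∑_{n=1}^∞ α_n Z_n φ_n(t) where (Z_n) are independent real random variables with mean 0, variance 1, absolutely continuous densities, (φ_n) is an orthonormal system in L²([0,1]), and ∑ α_n² < ∞ with each α_n > 0. Then for every d ≥ 0, lim_{h→0⁺} h^{−d}·P(‖X‖_{L²} ≤ h) = 0. Consequently X does not satisfy hypothesis (H) for the L² norm at the point 0. -/

import Mathlib

open MeasureTheory ProbabilityTheory Filter

/-- A function is absolutely continuous if it is an indefinite integral of a
locally integrable function. -/
def AbsCont (h : ℝ → ℝ) : Prop :=
  ∃ h' : ℝ → ℝ, LocallyIntegrable h' volume ∧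
    ∀ a b : ℝ, h b - h a = ∫ t in a..b, h' t

/-!
Since `α n * Z n = ⟪φ n, X⟫` is bounded by `‖X‖`, independence gives
`P(‖X‖ ≤ h) ≤ ∏_{n < N} P(|Z n| ≤ h / α n)`, and a continuous density makes each factor `O(h)`;
hence `P(‖X‖ ≤ h) = O(h ^ N)` for every `N`. On the other hand, splitting the integral in (H)
at a suitable `l < 1` and using monotonicity gives `P(‖X‖ ≤ l h) ≥ (θ / 2) P(‖X‖ ≤ h)`, so along
`h = l ^ k` the small-ball probability decays only polynomially.
-/

open Set Topology

lemma AbsCont.continuous {g : ℝ → ℝ} (hg : AbsCont g) : Continuous g := by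
  obtain ⟨g', hg', hprim⟩ := hg
  have hg_eq : g = fun b => g 0 + ∫ t in (0:ℝ)..b, g' t :=
    funext fun b => by linarith [hprim 0 b]
  rw [hg_eq]
  exact continuous_const.add (intervalIntegral.continuous_primitive
    (fun a b => (hg'.integrableOn_isCompact isCompact_uIcc).intervalIntegrable) 0)

lemma exists_measure_preimage_Icc_le_mul {Ω : Type*} [MeasurableSpace Ω] {P : Measure Ω}
    {Z : Ω → ℝ} (hZ : Measurable Z) {f : ℝ → ℝ} (hf : Continuous f)
    (hd : P.map Z = volume.withDensity (fun x => ENNReal.ofReal (f x))) :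
    ∃ M : ℝ, ∀ c ∈ Ioc (0:ℝ) 1, (P (Z ⁻¹' Icc (-c) c)).toReal ≤ M * c := by
  obtain ⟨M, hM⟩ := (isCompact_Icc (a := (-1:ℝ)) (b := 1)).exists_bound_of_continuousOn
    hf.continuousOn
  have hM0 : 0 ≤ M := (norm_nonneg _).trans (hM 0 ⟨by norm_num, by norm_num⟩)
  refine ⟨2 * M, fun c ⟨_, hc1⟩ => ENNReal.toReal_le_of_le_ofReal (by positivity) ?_⟩
  calc P (Z ⁻¹' Icc (-c) c) = ∫⁻ x in Icc (-c) c, ENNReal.ofReal (f x) := by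
        rw [← Measure.map_apply hZ measurableSet_Icc, hd, withDensity_apply _ measurableSet_Icc]
    _ ≤ ∫⁻ _ in Icc (-c) c, ENNReal.ofReal M := by
        refine setLIntegral_mono' measurableSet_Icc fun x hx => ENNReal.ofReal_le_ofReal ?_
        exact (le_abs_self _).trans (hM x ⟨by linarith [hx.1], hx.2.trans hc1⟩)
    _ = ENNReal.ofReal (2 * M * c) := by
        rw [setLIntegral_const, Real.volume_Icc, ← ENNReal.ofReal_mul hM0]
        ring_nf

lemma Orthonormal.inner_eq_of_hasSum {𝕜 E ι : Type*} [RCLike 𝕜] [NormedAddCommGroup E]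
    [InnerProductSpace 𝕜 E] {v : ι → E} (hv : Orthonormal 𝕜 v) {a : ι → 𝕜} {x : E}
    (hx : HasSum (fun i => a i • v i) x) (i : ι) : inner 𝕜 (v i) x = a i := by
  classical
  have hinner := hx.mapL (innerSL 𝕜 (v i))
  simp only [innerSL_apply_apply, inner_smul_right, orthonormal_iff_ite.mp hv, mul_ite,
    mul_one, mul_zero] at hinner
  refine hinner.unique ?_
  convert hasSum_ite_eq i (a i) using 2 with j
  by_cases hij : i = j <;> simp [hij, eq_comm]

lemma Orthonormal.norm_le_of_hasSum {𝕜 E ι : Type*} [RCLike 𝕜] [NormedAddCommGroup E]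
    [InnerProductSpace 𝕜 E] {v : ι → E} (hv : Orthonormal 𝕜 v) {a : ι → 𝕜} {x : E}
    (hx : HasSum (fun i => a i • v i) x) (i : ι) : ‖a i‖ ≤ ‖x‖ := by
  simpa [hv.inner_eq_of_hasSum hx i, hv.norm_eq_one] using norm_inner_le_norm (𝕜 := 𝕜) (v i) x

lemma eventually_measure_norm_le_le_mul_pow {Ω E : Type*} [MeasurableSpace Ω] {P : Measure Ω}
    [IsFiniteMeasure P] [NormedAddCommGroup E] [InnerProductSpace ℝ E] {Z : ℕ → Ω → ℝ}
    (hindep : iIndepFun Z P)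
    (hsmall : ∀ n, ∃ M : ℝ, ∀ c ∈ Ioc (0:ℝ) 1, (P (Z n ⁻¹' Icc (-c) c)).toReal ≤ M * c)
    {α : ℕ → ℝ} (hα : ∀ n, 0 < α n) {v : ℕ → E} (hv : Orthonormal ℝ v) {X : Ω → E}
    (hX : ∀ ω, HasSum (fun n => (α n * Z n ω) • v n) (X ω)) (N : ℕ) :
    ∃ C : ℝ, ∀ᶠ h in 𝓝[>] 0, (P {ω | ‖X ω‖ ≤ h}).toReal ≤ C * h ^ N := by
  choose M hM using hsmall
  refine ⟨∏ n ∈ Finset.range N, M n / α n, ?_⟩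
  have hsmall_h : ∀ᶠ h in 𝓝[>] (0:ℝ), ∀ n ∈ Finset.range N, h ≤ α n :=
    (Finset.eventually_all _).2 fun n _ =>
      eventually_nhdsWithin_of_eventually_nhds (eventually_le_nhds (hα n))
  filter_upwards [hsmall_h, self_mem_nhdsWithin] with h hhα (hh : 0 < h)
  have hsub : {ω | ‖X ω‖ ≤ h} ⊆ ⋂ n ∈ Finset.range N, Z n ⁻¹' Icc (-(h / α n)) (h / α n) := by
    intro ω hω
    simp only [mem_iInter, mem_preimage]
    intro n _
    rw [mem_Icc, ← abs_le, le_div_iff₀ (hα n)]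
    have hcoef := hv.norm_le_of_hasSum (hX ω) n
    rw [Real.norm_eq_abs, abs_mul, abs_of_pos (hα n), mul_comm] at hcoef
    exact hcoef.trans hω
  calc (P {ω | ‖X ω‖ ≤ h}).toReal
      ≤ (P (⋂ n ∈ Finset.range N, Z n ⁻¹' Icc (-(h / α n)) (h / α n))).toReal :=
        ENNReal.toReal_mono (measure_ne_top P _) (measure_mono hsub)
    _ = ∏ n ∈ Finset.range N, (P (Z n ⁻¹' Icc (-(h / α n)) (h / α n))).toReal := by
        rw [hindep.meas_biInter fun n _ => ⟨_, measurableSet_Icc, rfl⟩, ENNReal.toReal_prod]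
    _ ≤ ∏ n ∈ Finset.range N, M n * (h / α n) :=
        Finset.prod_le_prod (fun _ _ => ENNReal.toReal_nonneg) fun n hn =>
          hM n _ ⟨div_pos hh (hα n), (div_le_one (hα n)).2 (hhα n hn)⟩
    _ = (∏ n ∈ Finset.range N, M n / α n) * h ^ N := by
        rw [Finset.prod_congr rfl fun n _ => show M n * (h / α n) = M n / α n * h by ring,
          Finset.prod_mul_distrib, Finset.prod_const, Finset.card_range]

lemma tendsto_rpow_neg_mul_nhdsGT_zero_of_le_mul_pow {g : ℝ → ℝ} (hg0 : ∀ h, 0 ≤ g h)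
    (hg : ∀ N : ℕ, ∃ C : ℝ, ∀ᶠ h in 𝓝[>] 0, g h ≤ C * h ^ N) (d : ℝ) :
    Tendsto (fun h => h ^ (-d) * g h) (𝓝[>] 0) (𝓝 0) := by
  set N : ℕ := ⌈d⌉₊ + 1
  obtain ⟨C, hC⟩ := hg N
  have hexp : 0 < (N : ℝ) - d := by push_cast [N]; linarith [Nat.le_ceil d]
  have hlim : Tendsto (fun h : ℝ => C * h ^ ((N : ℝ) - d)) (𝓝[>] 0) (𝓝 0) := by
    have hpow : Tendsto (fun h : ℝ => h ^ ((N : ℝ) - d)) (𝓝 0) (𝓝 0) := by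
      simpa [Real.zero_rpow hexp.ne'] using
        (Real.continuousAt_rpow_const 0 _ (Or.inr hexp.le)).tendsto
    simpa using (hpow.mono_left nhdsWithin_le_nhds).const_mul C
  refine squeeze_zero' ?_ ?_ hlim
  · filter_upwards [self_mem_nhdsWithin] with h (hh : 0 < h)
    exact mul_nonneg (Real.rpow_nonneg hh.le _) (hg0 h)
  · filter_upwards [hC, self_mem_nhdsWithin] with h hgh (hh : 0 < h)
    calc h ^ (-d) * g h ≤ h ^ (-d) * (C * h ^ N) :=
          mul_le_mul_of_nonneg_left hgh (Real.rpow_nonneg hh.le _)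
      _ = C * h ^ ((N : ℝ) - d) := by
          rw [← Real.rpow_natCast, sub_eq_neg_add, Real.rpow_add hh]
          ring

lemma Monotone.integral_comp_mul_le {g : ℝ → ℝ} (hg : Monotone g) {h l : ℝ} (hh : 0 ≤ h)
    (hl0 : 0 ≤ l) (hl1 : l ≤ 1) :
    ∫ t in (0:ℝ)..1, g (h * t) ≤ l * g (l * h) + (1 - l) * g h := by
  have hint : ∀ a b : ℝ, IntervalIntegrable (fun t => g (h * t)) volume a b :=
    fun _ _ => (hg.comp (monotone_mul_left_of_nonneg hh)).intervalIntegrable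
  rw [← intervalIntegral.integral_add_adjacent_intervals (hint 0 l) (hint l 1)]
  calc (∫ t in (0:ℝ)..l, g (h * t)) + ∫ t in l..1, g (h * t)
      ≤ (∫ _ in (0:ℝ)..l, g (l * h)) + ∫ _ in l..1, g h := by
        gcongr
        · exact intervalIntegral.integral_mono_on hl0 (hint _ _) intervalIntegrable_const
            fun t ht => hg (by nlinarith [ht.2])
        · exact intervalIntegral.integral_mono_on hl1 (hint _ _) intervalIntegrable_const
            fun t ht => hg (by nlinarith [ht.2])
    _ = l * g (l * h) + (1 - l) * g h := by simp

lemma Monotone.exists_not_tendsto_rpow_neg_mul {g : ℝ → ℝ} (hg : Monotone g)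
    (hg0 : ∀ h, 0 ≤ g h) (hg1 : 0 < g 1) {θ : ℝ} (hθ : 0 < θ)
    (hH : ∀ h ∈ Ioc (0:ℝ) 1, θ * g h ≤ ∫ t in (0:ℝ)..1, g (h * t)) :
    ∃ d : ℝ, ¬ Tendsto (fun h => h ^ (-d) * g h) (𝓝[>] 0) (𝓝 0) := by
  set l : ℝ := max (1 / 2) (1 - θ / 2)
  have hl0 : 0 < l := lt_max_of_lt_left (by norm_num)
  have hl1 : l < 1 := max_lt (by norm_num) (by linarith)
  have hstep : ∀ h ∈ Ioc (0:ℝ) 1, θ / 2 * g h ≤ g (l * h) := by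
    intro h hh
    have hsplit := (hH h hh).trans (hg.integral_comp_mul_le hh.1.le hl0.le hl1.le)
    have hθl : θ / 2 ≤ θ + l - 1 := by linarith [le_max_right (1 / 2 : ℝ) (1 - θ / 2)]
    nlinarith [hg0 h, hg0 (l * h)]
  have hiter : ∀ k : ℕ, (θ / 2) ^ k * g 1 ≤ g (l ^ k) := by
    intro k
    induction k with
    | zero => simp
    | succ k ih =>
      calc (θ / 2) ^ (k + 1) * g 1 = θ / 2 * ((θ / 2) ^ k * g 1) := by ring
        _ ≤ θ / 2 * g (l ^ k) := by gcongr
        _ ≤ g (l ^ (k + 1)) := by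
          rw [pow_succ']
          exact hstep _ ⟨pow_pos hl0 k, pow_le_one₀ hl0.le hl1.le⟩
  obtain ⟨N, hN⟩ := exists_pow_lt_of_lt_one (half_pos hθ) hl1
  have hseq : Tendsto (l ^ ·) atTop (𝓝[>] 0) :=
    tendsto_nhdsWithin_iff.2 ⟨tendsto_pow_atTop_nhds_zero_of_lt_one hl0.le hl1,
      Eventually.of_forall fun k => pow_pos hl0 k⟩
  refine ⟨N, fun hdecay => hg1.not_ge (_root_.ge_of_tendsto (hdecay.comp hseq) ?_)⟩
  refine Eventually.of_forall fun k => ?_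
  rw [Function.comp_apply, Real.rpow_neg (pow_nonneg hl0.le k), Real.rpow_natCast,
    le_inv_mul_iff₀ (by positivity)]
  calc (l ^ k) ^ N * g 1 = (l ^ N) ^ k * g 1 := by rw [← pow_mul, ← pow_mul, mul_comm k]
    _ ≤ (θ / 2) ^ k * g 1 := by gcongr
    _ ≤ g (l ^ k) := hiter k

theorem stmt12_general {Ω : Type*} [MeasurableSpace Ω] (P : Measure Ω) [IsProbabilityMeasure P]
    (Z : ℕ → Ω → ℝ) (hmeas : ∀ n, Measurable (Z n))
    (hindep : iIndepFun Z P)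
    (f : ℕ → ℝ → ℝ)
    (hdens : ∀ n, Measure.map (Z n) P = volume.withDensity (fun x => ENNReal.ofReal (f n x)))
    (hfAC : ∀ n, AbsCont (f n))
    (α : ℕ → ℝ) (hα : ∀ n, 0 < α n)
    (φ : ℕ → Lp ℝ 2 (volume.restrict (Set.Icc (0:ℝ) 1)))
    (hortho : Orthonormal ℝ φ)
    (X : Ω → Lp ℝ 2 (volume.restrict (Set.Icc (0:ℝ) 1)))
    (hX : ∀ ω, HasSum (fun n => (α n * Z n ω) • φ n) (X ω)) :
    (∀ d : ℝ, 0 ≤ d →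
      Tendsto (fun h : ℝ => h ^ (-d) * (P {ω | ‖X ω‖ ≤ h}).toReal)
        (nhdsWithin 0 (Set.Ioi 0)) (nhds 0)) ∧
    -- `X` fails hypothesis (H) for the `L²` norm at the point `0`
    ¬ ∃ θ : ℝ, 0 < θ ∧ ∀ h ∈ Set.Ioc (0:ℝ) 1,
        0 < (P {ω | ‖X ω‖ ≤ h}).toReal ∧
        θ * (P {ω | ‖X ω‖ ≤ h}).toReal ≤
          ∫ t in (0:ℝ)..1, (P {ω | ‖X ω‖ ≤ h * t}).toReal := by
  have hsmall (n : ℕ) : ∃ M : ℝ, ∀ c ∈ Ioc (0:ℝ) 1, (P (Z n ⁻¹' Icc (-c) c)).toReal ≤ M * c :=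
    exists_measure_preimage_Icc_le_mul (hmeas n) (hfAC n).continuous (hdens n)
  have hdecay (d : ℝ) :
      Tendsto (fun h : ℝ => h ^ (-d) * (P {ω | ‖X ω‖ ≤ h}).toReal) (𝓝[>] 0) (𝓝 0) :=
    tendsto_rpow_neg_mul_nhdsGT_zero_of_le_mul_pow (fun _ => ENNReal.toReal_nonneg)
      (eventually_measure_norm_le_le_mul_pow hindep hsmall hα hortho hX) d
  refine ⟨fun d _ => hdecay d, ?_⟩
  rintro ⟨θ, hθ, hH⟩
  have hmono : Monotone fun h : ℝ => (P {ω | ‖X ω‖ ≤ h}).toReal := fun _ _ hab =>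
    ENNReal.toReal_mono (measure_ne_top P _) (measure_mono fun _ hω => le_trans hω hab)
  obtain ⟨d, hd⟩ := hmono.exists_not_tendsto_rpow_neg_mul (fun _ => ENNReal.toReal_nonneg)
    (hH 1 ⟨one_pos, le_rfl⟩).1 hθ fun h hh => (hH h hh).2
  exact hd (hdecay d)

theorem stmt12 {Ω : Type*} [MeasurableSpace Ω] (P : Measure Ω) [IsProbabilityMeasure P]
    (Z : ℕ → Ω → ℝ) (hmeas : ∀ n, Measurable (Z n))
    (hindep : iIndepFun Z P)
    (hmean : ∀ n, ∫ ω, Z n ω ∂P = 0)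
    (hvar : ∀ n, ∫ ω, (Z n ω) ^ 2 ∂P = 1)
    (f : ℕ → ℝ → ℝ)
    (hdens : ∀ n, Measure.map (Z n) P = volume.withDensity (fun x => ENNReal.ofReal (f n x)))
    (hfAC : ∀ n, AbsCont (f n))
    (α : ℕ → ℝ) (hα : ∀ n, 0 < α n) (hsum : Summable (fun n => (α n) ^ 2))
    (φ : ℕ → Lp ℝ 2 (volume.restrict (Set.Icc (0:ℝ) 1)))
    (hortho : Orthonormal ℝ φ)
    (X : Ω → Lp ℝ 2 (volume.restrict (Set.Icc (0:ℝ) 1)))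
    (hX : ∀ ω, HasSum (fun n => (α n * Z n ω) • φ n) (X ω)) :
    (∀ d : ℝ, 0 ≤ d →
      Tendsto (fun h : ℝ => h ^ (-d) * (P {ω | ‖X ω‖ ≤ h}).toReal)
        (nhdsWithin 0 (Set.Ioi 0)) (nhds 0)) ∧
    -- `X` fails hypothesis (H) for the `L²` norm at the point `0`
    ¬ ∃ θ : ℝ, 0 < θ ∧ ∀ h ∈ Set.Ioc (0:ℝ) 1,
        0 < (P {ω | ‖X ω‖ ≤ h}).toReal ∧
        θ * (P {ω | ‖X ω‖ ≤ h}).toReal ≤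
          ∫ t in (0:ℝ)..1, (P {ω | ‖X ω‖ ≤ h * t}).toReal :=
  stmt12_general P Z hmeas hindep f hdens hfAC α hα φ hortho X hX
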